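/- Let M be a small elementary submodel of 𝕄, q a global type finitely satisfiable in M, and let a¹,…,aⁿ be the first n terms of a coheir Morley sequence in q over M. Let a be a tuple with a ≡_M a¹ and let b be any tuple. Then there exist tuples b¹,…,bⁿ such that b¹a¹,…,bⁿaⁿ are the first n terms of a coheir Morley sequence over M and bⁱaⁱ ≡_M ba for each i; the same holds for infinite coheir Morley sequences in place of their initial segments. -/

import Mathlib

/- Common model-theoretic infrastructure for formalizing
   "NSOP₂ theories are NSOP₁" (arXiv:2206.08512).

   We work with a monster model `𝕄` of a complete theory: a sufficiently
   saturated and strongly homogeneous `L`-structure.  Tuples are functions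
   `α → 𝕄`; sets of formulas with parameters are coded via `FmlP`. -/

open FirstOrder Language

universe u v w

namespace NSOP2Paper

/-- A first-order formula in free variables `α ⊕ Fin n` together with an
`n`-tuple of parameters from `𝕄`. -/
abbrev FmlP (L : FirstOrder.Language.{u, u}) (𝕄 : Type u) (α : Type v) :=
  Σ n : ℕ, L.Formula (α ⊕ Fin n) × (Fin n → 𝕄)

/-- `a ≡_C b` : the tuples `a` and `b` satisfy the same formulas with
parameters from `C`. -/
def EqTpOver (L : FirstOrder.Language.{u, u}) {𝕄 : Type u} [L.Structure 𝕄] (C : Set 𝕄)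
    {α : Type v} (a b : α → 𝕄) : Prop :=
  ∀ (n : ℕ) (φ : L.Formula (α ⊕ Fin n)) (c : Fin n → 𝕄), (∀ i, c i ∈ C) →
    (φ.Realize (Sum.elim a c) ↔ φ.Realize (Sum.elim b c))

/-- `tp(a / C)` is finitely satisfiable in `Ms`: every formula over `C`
satisfied by `a` has a realization by a tuple from `Ms`. -/
def FinSatIn (L : FirstOrder.Language.{u, u}) {𝕄 : Type u} [L.Structure 𝕄] (Ms : Set 𝕄)
    {α : Type v} (a : α → 𝕄) (C : Set 𝕄) : Prop :=
  ∀ (n : ℕ) (φ : L.Formula (α ⊕ Fin n)) (c : Fin n → 𝕄), (∀ i, c i ∈ C) →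
    φ.Realize (Sum.elim a c) →
    ∃ m : α → 𝕄, (∀ i, m i ∈ Ms) ∧ φ.Realize (Sum.elim m c)

/-- `Ms` is the underlying set of a (small) elementary submodel of `𝕄`. -/
def IsElemSubmodel (L : FirstOrder.Language.{u, u}) {𝕄 : Type u} [L.Structure 𝕄] (Ms : Set 𝕄) : Prop :=
  ∃ S : L.ElementarySubstructure 𝕄, (S : Set 𝕄) = Ms

/-- A complete consistent global type (a complete type over the monster `𝕄`)
in variables `α`, coded as the set of formulas-with-parameters it contains. -/
structure GlobalType (L : FirstOrder.Language.{u, u}) (𝕄 : Type u) [L.Structure 𝕄] (α : Type v) where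
  carrier : Set (FmlP L 𝕄 α)
  consistent : ∀ t : Finset (FmlP L 𝕄 α), ↑t ⊆ carrier →
    ∃ a : α → 𝕄, ∀ p ∈ t, p.2.1.Realize (Sum.elim a p.2.2)
  complete : ∀ (n : ℕ) (φ : L.Formula (α ⊕ Fin n)) (c : Fin n → 𝕄),
    (⟨n, (φ, c)⟩ : FmlP L 𝕄 α) ∈ carrier ∨ (⟨n, (φ.not, c)⟩ : FmlP L 𝕄 α) ∈ carrier

variable {L : FirstOrder.Language.{u, u}} {𝕄 : Type u} [L.Structure 𝕄]

/-- The global type `q` is finitely satisfiable in `Ms` (i.e. it is a coheir of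
its restriction to `Ms`). -/
def GlobalType.FinSatInM {α : Type v} (q : GlobalType L 𝕄 α) (Ms : Set 𝕄) : Prop :=
  ∀ t : Finset (FmlP L 𝕄 α), ↑t ⊆ q.carrier →
    ∃ m : α → 𝕄, (∀ i, m i ∈ Ms) ∧ ∀ p ∈ t, p.2.1.Realize (Sum.elim m p.2.2)

/-- `a ⊨ q|_C` : the tuple `a` realizes the restriction of the global type `q`
to parameters from `C`. -/
def RealizesType {α : Type v} (q : GlobalType L 𝕄 α) (a : α → 𝕄) (C : Set 𝕄) : Prop :=
  ∀ (n : ℕ) (φ : L.Formula (α ⊕ Fin n)) (c : Fin n → 𝕄), (∀ i, c i ∈ C) →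
    (⟨n, (φ, c)⟩ : FmlP L 𝕄 α) ∈ q.carrier → φ.Realize (Sum.elim a c)

/-- The global type `q` extends `tp(a / C)`. -/
def ExtendsTpOver {α : Type v} (q : GlobalType L 𝕄 α) (C : Set 𝕄) (a : α → 𝕄) : Prop :=
  ∀ (n : ℕ) (φ : L.Formula (α ⊕ Fin n)) (c : Fin n → 𝕄), (∀ i, c i ∈ C) →
    φ.Realize (Sum.elim a c) → (⟨n, (φ, c)⟩ : FmlP L 𝕄 α) ∈ q.carrier

/-- `B` is a coheir Morley sequence over `Ms` in the global type `q`: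
`q` is finitely satisfiable in `Ms` and `B i ⊨ q|_(Ms ∪ B_{<i})`. -/
def MorleyIn {α : Type v} (q : GlobalType L 𝕄 α) (Ms : Set 𝕄) (B : ℕ → α → 𝕄) : Prop :=
  q.FinSatInM Ms ∧
    ∀ i : ℕ, RealizesType q (B i) (Ms ∪ ⋃ (j : ℕ) (_ : j < i), Set.range (B j))

/-- `B` is a coheir Morley sequence over `Ms`. -/
def CoheirMorley (L : FirstOrder.Language.{u, u}) {𝕄 : Type u} [L.Structure 𝕄] (Ms : Set 𝕄)
    {α : Type v} (B : ℕ → α → 𝕄) : Prop :=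
  ∃ q : GlobalType L 𝕄 α, MorleyIn q Ms B

/-- Flatten an `ℕ`-indexed sequence of `α`-tuples into a single tuple. -/
def flatSeq {α : Type v} (I : ℕ → α → 𝕄) : ℕ × α → 𝕄 := fun p => I p.1 p.2

/-- The sequence `I` is indiscernible over `C`. -/
def IndiscernibleOver (L : FirstOrder.Language.{u, u}) {𝕄 : Type u} [L.Structure 𝕄] (C : Set 𝕄)
    {α : Type v} (I : ℕ → α → 𝕄) : Prop :=
  ∀ (n : ℕ) (f g : Fin n → ℕ), StrictMono f → StrictMono g →
    EqTpOver L C (fun p : Fin n × α => I (f p.1) p.2) (fun p : Fin n × α => I (g p.1) p.2)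

/-- `𝕄` is `κ`-saturated: every finitely satisfiable set of formulas in fewer
than `κ` variables over a parameter set of size `< κ` is realized in `𝕄`. -/
def IsSaturated (L : FirstOrder.Language.{u, u}) (𝕄 : Type u) [L.Structure 𝕄] (κ : Cardinal.{u}) : Prop :=
  ∀ (α : Type u) (A : Set 𝕄), Cardinal.mk α < κ → Cardinal.mk A < κ →
    ∀ Γ : Set (FmlP L 𝕄 α), (∀ p ∈ Γ, ∀ i, p.2.2 i ∈ A) →
      (∀ t : Finset (FmlP L 𝕄 α), ↑t ⊆ Γ →
        ∃ a : α → 𝕄, ∀ p ∈ t, p.2.1.Realize (Sum.elim a p.2.2)) →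
      ∃ a : α → 𝕄, ∀ p ∈ Γ, p.2.1.Realize (Sum.elim a p.2.2)

/-- `𝕄` is strongly `κ`-homogeneous: partial elementary maps between tuples of
length `< κ` extend to automorphisms of `𝕄`. -/
def IsStronglyHomogeneous (L : FirstOrder.Language.{u, u}) (𝕄 : Type u) [L.Structure 𝕄]
    (κ : Cardinal.{u}) : Prop :=
  ∀ (α : Type u), Cardinal.mk α < κ → ∀ a b : α → 𝕄, EqTpOver L (∅ : Set 𝕄) a b →
    ∃ σ : 𝕄 ≃[L] 𝕄, ∀ i, σ (a i) = b i

/-- `𝕄` is a monster model (for smallness degree `κ`): sufficiently saturated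
and strongly homogeneous. -/
def IsMonster (L : FirstOrder.Language.{u, u}) (𝕄 : Type u) [L.Structure 𝕄] (κ : Cardinal.{u}) : Prop :=
  Cardinal.aleph0 < κ ∧ IsSaturated L 𝕄 κ ∧ IsStronglyHomogeneous L 𝕄 κ

/-! ### Tree combinatorics -/

/-- The meet (longest common prefix) of two finite sequences. -/
def meet {A : Type w} [DecidableEq A] : List A → List A → List A
  | a :: as, b :: bs => if a = b then a :: meet as bs else []
  | _, _ => []

/-- The meet of `η 0, …, η i`. -/
def combMeet {A : Type w} [DecidableEq A] {k : ℕ} (η : Fin k → List A) (i : Fin k) : List A :=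
  (List.ofFn fun j : Fin i.val => η (Fin.castLE i.2.le j)).foldl meet (η i)

/-- `η 0, …, η (k-1)` is a descending comb: a lexicographically increasing
antichain such that the meet of `η 0, …, η (i+1)` is a proper initial segment
of the meet of `η 0, …, η i`. -/
def DescendingComb {A : Type w} [DecidableEq A] [LT A] {k : ℕ} (η : Fin k → List A) : Prop :=
  (∀ i j : Fin k, i ≠ j → ¬ η i <+: η j) ∧
  (∀ i j : Fin k, i < j → List.Lex (· < ·) (η i) (η j)) ∧
  (∀ (i : ℕ) (h : i + 1 < k),
    combMeet η ⟨i + 1, h⟩ <+: combMeet η ⟨i, by omega⟩ ∧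
    combMeet η ⟨i + 1, h⟩ ≠ combMeet η ⟨i, by omega⟩)

/-! ### Tree properties of theories (witnessed in the monster model) -/

/-- `T = Th(𝕄)` has `SOP₁`. -/
def HasSOP1 (L : FirstOrder.Language.{u, u}) (𝕄 : Type u) [L.Structure 𝕄] : Prop :=
  ∃ (k m : ℕ) (φ : L.Formula (Fin k ⊕ Fin m)) (b : List Bool → Fin m → 𝕄),
    (∀ σ : ℕ → Bool, ∃ a : Fin k → 𝕄,
      ∀ n : ℕ, φ.Realize (Sum.elim a (b (List.ofFn fun i : Fin n => σ i)))) ∧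
    ∀ η₁ η₂ : List Bool, (η₁ ++ [false]) <+: η₂ →
      ¬ ∃ a : Fin k → 𝕄, φ.Realize (Sum.elim a (b η₂)) ∧
        φ.Realize (Sum.elim a (b (η₁ ++ [true])))

/-- `T = Th(𝕄)` has `SOP₂`. -/
def HasSOP2 (L : FirstOrder.Language.{u, u}) (𝕄 : Type u) [L.Structure 𝕄] : Prop :=
  ∃ (k m : ℕ) (φ : L.Formula (Fin k ⊕ Fin m)) (b : List Bool → Fin m → 𝕄),
    (∀ σ : ℕ → Bool, ∃ a : Fin k → 𝕄,
      ∀ n : ℕ, φ.Realize (Sum.elim a (b (List.ofFn fun i : Fin n => σ i)))) ∧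
    ∀ η₁ η₂ : List Bool, ¬ η₁ <+: η₂ → ¬ η₂ <+: η₁ →
      ¬ ∃ a : Fin k → 𝕄, φ.Realize (Sum.elim a (b η₁)) ∧ φ.Realize (Sum.elim a (b η₂))

/-- `T = Th(𝕄)` has `k`-`DCTP₁`: paths are consistent but descending combs of
size `k` are inconsistent. -/
def HasKDCTP1 (L : FirstOrder.Language.{u, u}) (𝕄 : Type u) [L.Structure 𝕄] (k : ℕ) : Prop :=
  ∃ (r m : ℕ) (φ : L.Formula (Fin r ⊕ Fin m)) (b : List ℕ → Fin m → 𝕄),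
    (∀ σ : ℕ → ℕ, ∃ a : Fin r → 𝕄,
      ∀ n : ℕ, φ.Realize (Sum.elim a (b (List.ofFn fun i : Fin n => σ i)))) ∧
    ∀ η : Fin k → List ℕ, DescendingComb η →
      ¬ ∃ a : Fin r → 𝕄, ∀ i, φ.Realize (Sum.elim a (b (η i)))

/-- `T = Th(𝕄)` has weak `k`-`TP₁`: paths are consistent but any `k` pairwise
incomparable nodes with common pairwise meet are inconsistent. -/
def HasWeakKTP1 (L : FirstOrder.Language.{u, u}) (𝕄 : Type u) [L.Structure 𝕄] (k : ℕ) : Prop :=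
  ∃ (r m : ℕ) (φ : L.Formula (Fin r ⊕ Fin m)) (b : List ℕ → Fin m → 𝕄),
    (∀ σ : ℕ → ℕ, ∃ a : Fin r → 𝕄,
      ∀ n : ℕ, φ.Realize (Sum.elim a (b (List.ofFn fun i : Fin n => σ i)))) ∧
    ∀ η : Fin k → List ℕ,
      (∀ i j, i ≠ j → ¬ η i <+: η j) →
      (∀ i j i' j' : Fin k, i ≠ j → i' ≠ j' → meet (η i) (η j) = meet (η i') (η j')) →
      ¬ ∃ a : Fin r → 𝕄, ∀ i, φ.Realize (Sum.elim a (b (η i)))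

/-- `T = Th(𝕄)` has `k`-`DCTP₂`: paths are `k`-inconsistent but descending
combs are consistent. -/
def HasKDCTP2 (L : FirstOrder.Language.{u, u}) (𝕄 : Type u) [L.Structure 𝕄] (k : ℕ) : Prop :=
  ∃ (r m : ℕ) (φ : L.Formula (Fin r ⊕ Fin m)) (b : List Bool → Fin m → 𝕄),
    (∀ σ : ℕ → Bool, ∀ s : Finset ℕ, s.card = k →
      ¬ ∃ a : Fin r → 𝕄, ∀ n ∈ s,
        φ.Realize (Sum.elim a (b (List.ofFn fun i : Fin n => σ i)))) ∧
    ∀ (l : ℕ) (η : Fin l → List Bool), DescendingComb η →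
      ∃ a : Fin r → 𝕄, ∀ i, φ.Realize (Sum.elim a (b (η i)))

/-! ### Kim-dividing and Conant-dividing, with respect to coheir Morley sequences -/

/-- `φ(x, b)` Kim-divides over `Ms`: some coheir Morley sequence over `Ms`
starting with `b` makes it inconsistent. -/
def KimDivides (L : FirstOrder.Language.{u, u}) {𝕄 : Type u} [L.Structure 𝕄] (Ms : Set 𝕄)
    {α : Type v} {n : ℕ} (φ : L.Formula (α ⊕ Fin n)) (b : Fin n → 𝕄) : Prop :=
  ∃ B : ℕ → Fin n → 𝕄, CoheirMorley L Ms B ∧ B 0 = b ∧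
    ¬ ∃ a : α → 𝕄, ∀ i, φ.Realize (Sum.elim a (B i))

/-- `φ(x, b)` Kim-forks over `Ms`: it implies a finite disjunction of formulas
Kim-dividing over `Ms`. -/
def KimForks (L : FirstOrder.Language.{u, u}) {𝕄 : Type u} [L.Structure 𝕄] (Ms : Set 𝕄)
    {α : Type v} {n : ℕ} (φ : L.Formula (α ⊕ Fin n)) (b : Fin n → 𝕄) : Prop :=
  ∃ (N : ℕ) (m : Fin N → ℕ) (ψ : ∀ j : Fin N, L.Formula (α ⊕ Fin (m j)))
    (c : ∀ j : Fin N, Fin (m j) → 𝕄),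
    (∀ j, KimDivides L Ms (ψ j) (c j)) ∧
    ∀ a : α → 𝕄, φ.Realize (Sum.elim a b) → ∃ j, (ψ j).Realize (Sum.elim a (c j))

/-- `φ(x, b)` Conant-divides over `Ms`: every coheir Morley sequence over `Ms`
starting with `b` makes it inconsistent. -/
def ConantDivides (L : FirstOrder.Language.{u, u}) {𝕄 : Type u} [L.Structure 𝕄] (Ms : Set 𝕄)
    {α : Type v} {n : ℕ} (φ : L.Formula (α ⊕ Fin n)) (b : Fin n → 𝕄) : Prop :=
  ∀ B : ℕ → Fin n → 𝕄, CoheirMorley L Ms B → B 0 = b →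
    ¬ ∃ a : α → 𝕄, ∀ i, φ.Realize (Sum.elim a (B i))

/-- `φ(x, b)` Conant-forks over `Ms`. -/
def ConantForks (L : FirstOrder.Language.{u, u}) {𝕄 : Type u} [L.Structure 𝕄] (Ms : Set 𝕄)
    {α : Type v} {n : ℕ} (φ : L.Formula (α ⊕ Fin n)) (b : Fin n → 𝕄) : Prop :=
  ∃ (N : ℕ) (m : Fin N → ℕ) (ψ : ∀ j : Fin N, L.Formula (α ⊕ Fin (m j)))
    (c : ∀ j : Fin N, Fin (m j) → 𝕄),
    (∀ j, ConantDivides L Ms (ψ j) (c j)) ∧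
    ∀ a : α → 𝕄, φ.Realize (Sum.elim a b) → ∃ j, (ψ j).Realize (Sum.elim a (c j))

/-- `a ⫝^{K*}_{Ms} b` : `tp(a/Ms b)` contains no formula Conant-forking
over `Ms`. -/
def ConantIndep (L : FirstOrder.Language.{u, u}) {𝕄 : Type u} [L.Structure 𝕄] (Ms : Set 𝕄)
    {α : Type v} {β : Type w} (a : α → 𝕄) (b : β → 𝕄) : Prop :=
  ∀ (n : ℕ) (φ : L.Formula (α ⊕ Fin n)) (d : Fin n → 𝕄),
    (∀ i, d i ∈ Ms ∪ Set.range b) → φ.Realize (Sum.elim a d) →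
    ¬ ConantForks L Ms φ d

/-! ### Abstract independence relations between sets over models -/

/-- An abstract ternary relation `A ⫝_M B` between subsets of `𝕄` over
(elementary submodels of) `𝕄`. -/
structure IndRel (L : FirstOrder.Language.{u, u}) (𝕄 : Type u) [L.Structure 𝕄] where
  rel : Set 𝕄 → Set 𝕄 → Set 𝕄 → Prop

/-- A set `S` of `α`-tuples is type-definable over `C`. -/
def TypeDefinableOver (L : FirstOrder.Language.{u, u}) {𝕄 : Type u} [L.Structure 𝕄] (C : Set 𝕄)
    {γ : Type v} (S : Set (γ → 𝕄)) : Prop :=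
  ∃ Γ : Set (FmlP L 𝕄 γ), (∀ p ∈ Γ, ∀ i, p.2.2 i ∈ C) ∧
    ∀ g : γ → 𝕄, g ∈ S ↔ ∀ p ∈ Γ, p.2.1.Realize (Sum.elim g p.2.2)

namespace IndRel

/-- Invariance under automorphisms of `𝕄`. -/
def Invariant (R : IndRel L 𝕄) : Prop :=
  ∀ (σ : 𝕄 ≃[L] 𝕄) (A Ms B : Set 𝕄), R.rel A Ms B →
    R.rel ((⇑σ) '' A) ((⇑σ) '' Ms) ((⇑σ) '' B)

/-- Monotonicity (on both sides). -/
def Mono (R : IndRel L 𝕄) : Prop :=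
  ∀ (A A' Ms B B' : Set 𝕄), IsElemSubmodel L Ms → R.rel A Ms B →
    Ms ⊆ A' → A' ⊆ A → Ms ⊆ B' → B' ⊆ B → R.rel A' Ms B'

/-- Existence: for `M ⊆ A, B` there is `A' ≡_M A` with `A' ⫝_M B`. -/
def Existence (R : IndRel L 𝕄) (κ : Cardinal.{u}) : Prop :=
  ∀ (Ms : Set 𝕄), IsElemSubmodel L Ms → Cardinal.mk Ms < κ →
    ∀ (α β : Type u), Cardinal.mk α < κ → Cardinal.mk β < κ →
      ∀ (a : α → 𝕄) (b : β → 𝕄),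
        ∃ a' : α → 𝕄, EqTpOver L Ms a' a ∧
          R.rel (Ms ∪ Set.range a') Ms (Ms ∪ Set.range b)

/-- Right extension. -/
def RightExt (R : IndRel L 𝕄) (κ : Cardinal.{u}) : Prop :=
  ∀ (Ms : Set 𝕄), IsElemSubmodel L Ms → Cardinal.mk Ms < κ →
    ∀ (α : Type u), Cardinal.mk α < κ → ∀ (a : α → 𝕄) (B C : Set 𝕄),
      Cardinal.mk B < κ → Cardinal.mk C < κ →
      R.rel (Set.range a) Ms B → B ⊆ C →
      ∃ a' : α → 𝕄, EqTpOver L B a' a ∧ R.rel (Set.range a') Ms C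

/-- Quasi-strong finite character: for complete types `p = tp(a₀/Ms)` and
`q = tp(b₀/Ms)`, the set of pairs of realizations `(a, b)` with `a ⫝_Ms b`
is type-definable over `Ms`. -/
def QSFC (R : IndRel L 𝕄) (κ : Cardinal.{u}) : Prop :=
  ∀ (Ms : Set 𝕄), IsElemSubmodel L Ms → Cardinal.mk Ms < κ →
    ∀ (α β : Type u), Cardinal.mk α < κ → Cardinal.mk β < κ →
      ∀ (a₀ : α → 𝕄) (b₀ : β → 𝕄),
        TypeDefinableOver L Ms {g : (α ⊕ β) → 𝕄 |
          EqTpOver L Ms (g ∘ Sum.inl) a₀ ∧ EqTpOver L Ms (g ∘ Sum.inr) b₀ ∧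
          R.rel (Set.range (g ∘ Sum.inl)) Ms (Set.range (g ∘ Sum.inr))}

/-- The coheir chain condition. -/
def CoheirChain (R : IndRel L 𝕄) (κ : Cardinal.{u}) : Prop :=
  ∀ (Ms : Set 𝕄), IsElemSubmodel L Ms → Cardinal.mk Ms < κ →
    ∀ (α β : Type u), Cardinal.mk α < κ → Cardinal.mk β < κ →
      ∀ (a : α → 𝕄) (b : β → 𝕄), R.rel (Set.range a) Ms (Set.range b) →
        ∀ I : ℕ → β → 𝕄, CoheirMorley L Ms I → I 0 = b →
          ∃ I' : ℕ → β → 𝕄, EqTpOver L Ms (flatSeq I') (flatSeq I) ∧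
            R.rel (Set.range a) Ms (⋃ i, Set.range (I' i)) ∧
            ∀ i, EqTpOver L (Ms ∪ Set.range a) (I' i) b

/-- `R` implies `⫝ʰ` : `A ⫝_M B` implies `tp(B / M A)` is finitely
satisfiable in `M`. -/
def StrongerThanH (R : IndRel L 𝕄) : Prop :=
  ∀ (A Ms B : Set 𝕄), IsElemSubmodel L Ms → R.rel A Ms B →
    FinSatIn L Ms (fun x : B => (x : 𝕄)) (Ms ∪ A)

end IndRel

/-- The axioms satisfied by the relations among which `⫝^CK` is weakest. -/
def GoodRel (R : IndRel L 𝕄) (κ : Cardinal.{u}) : Prop :=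
  R.StrongerThanH ∧ R.Invariant ∧ R.Mono ∧ R.Existence κ ∧ R.RightExt κ ∧ R.CoheirChain κ

/-- `R` is `⫝^CK` : the weakest relation implying `⫝ʰ` and satisfying
invariance, monotonicity, existence, right extension and the coheir chain
condition. -/
def IsCK (R : IndRel L 𝕄) (κ : Cardinal.{u}) : Prop :=
  GoodRel R κ ∧ ∀ R' : IndRel L 𝕄, GoodRel R' κ →
    ∀ A Ms B : Set 𝕄, R'.rel A Ms B → R.rel A Ms B

/-- `q` is a canonical global type over `Ms` (w.r.t. the relation `R = ⫝^CK`):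
whenever `c ⊨ q|_{Ms b}` we have `b ⫝^CK_{Ms} c`. -/
def IsCanonicalGlobal (R : IndRel L 𝕄) (κ : Cardinal.{u}) (Ms : Set 𝕄) {α : Type v}
    (q : GlobalType L 𝕄 α) : Prop :=
  ∀ (β : Type u), Cardinal.mk β < κ → ∀ (b : β → 𝕄) (c : α → 𝕄),
    RealizesType q c (Ms ∪ Set.range b) → R.rel (Set.range b) Ms (Set.range c)

/-- A canonical Morley sequence over `Ms`: a coheir Morley sequence in a
canonical coheir. -/
def CanonicalMorley (R : IndRel L 𝕄) (κ : Cardinal.{u}) (Ms : Set 𝕄) {α : Type v}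
    (I : ℕ → α → 𝕄) : Prop :=
  ∃ q : GlobalType L 𝕄 α, IsCanonicalGlobal R κ Ms q ∧ MorleyIn q Ms I

/-- `q` is a strong canonical global type over `Ms`. -/
def IsStrongCanonical (R : IndRel L 𝕄) (κ : Cardinal.{u}) (Ms : Set 𝕄) {α : Type v}
    (q : GlobalType L 𝕄 α) : Prop :=
  ∀ (β : Type u), Cardinal.mk β < κ → ∀ (b : β → 𝕄) (c : α → 𝕄),
    RealizesType q c (Ms ∪ Set.range b) →
    ∀ (γ : Type u), Cardinal.mk γ < κ → ∀ (a : γ → 𝕄),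
      ∃ a' : γ → 𝕄, EqTpOver L (Ms ∪ Set.range c) a' a ∧
        ∃ q' : GlobalType L 𝕄 (γ ⊕ α), IsCanonicalGlobal R κ Ms q' ∧
          ExtendsTpOver q' (Ms ∪ Set.range b) (Sum.elim a' c)

/-! ### `M`-invariant ideals and `𝓘`-Kim-dividing -/

/-- An `Ms`-invariant ideal on the definable subsets of `𝕄` (in variables `α`). -/
structure InvIdeal (L : FirstOrder.Language.{u, u}) (𝕄 : Type u) [L.Structure 𝕄] (Ms : Set 𝕄)
    (α : Type v) where
  mem : Set (α → 𝕄) → Prop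
  definable_of_mem : ∀ S, mem S → ∃ (n : ℕ) (ψ : L.Formula (α ⊕ Fin n)) (c : Fin n → 𝕄),
    S = {a : α → 𝕄 | ψ.Realize (Sum.elim a c)}
  union_mem : ∀ S T, mem S → mem T → mem (S ∪ T)
  subset_mem : ∀ S T, mem S →
    (∃ (n : ℕ) (ψ : L.Formula (α ⊕ Fin n)) (c : Fin n → 𝕄),
      T = {a : α → 𝕄 | ψ.Realize (Sum.elim a c)}) →
    T ⊆ S → mem T
  invariant : ∀ σ : 𝕄 ≃[L] 𝕄, (∀ x ∈ Ms, σ x = x) → ∀ S, mem S →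
    mem ((fun a => (⇑σ) ∘ a) '' S)

/-- `φ(x, b)` `𝓘`-Kim-divides over `Ms`. -/
def IKimDivides {Ms : Set 𝕄} {α : Type v} (I : InvIdeal L 𝕄 Ms α) {n : ℕ}
    (φ : L.Formula (α ⊕ Fin n)) (b : Fin n → 𝕄) : Prop :=
  ∃ (B : ℕ → Fin n → 𝕄) (k : ℕ), CoheirMorley L Ms B ∧ B 0 = b ∧ 0 < k ∧
    ∀ s : Finset ℕ, s.card = k →
      I.mem {a : α → 𝕄 | ∀ i ∈ s, φ.Realize (Sum.elim a (B i))}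

/-- `φ(x, b)` `𝓘`-Kim-forks over `Ms`. -/
def IKimForks {Ms : Set 𝕄} {α : Type v} (I : InvIdeal L 𝕄 Ms α) {n : ℕ}
    (φ : L.Formula (α ⊕ Fin n)) (b : Fin n → 𝕄) : Prop :=
  ∃ (N : ℕ) (m : Fin N → ℕ) (ψ : ∀ j : Fin N, L.Formula (α ⊕ Fin (m j)))
    (c : ∀ j : Fin N, Fin (m j) → 𝕄),
    (∀ j, IKimDivides I (ψ j) (c j)) ∧
    ∀ a : α → 𝕄, φ.Realize (Sum.elim a b) → ∃ j, (ψ j).Realize (Sum.elim a (c j))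

/-- `φ(x, b)` `𝓘`-quasi-divides over `Ms`. -/
def IQuasiDivides {Ms : Set 𝕄} {α : Type v} (I : InvIdeal L 𝕄 Ms α) {n : ℕ}
    (φ : L.Formula (α ⊕ Fin n)) (b : Fin n → 𝕄) : Prop :=
  ∃ (mm : ℕ) (b' : Fin mm → Fin n → 𝕄), 0 < mm ∧ (∀ j, EqTpOver L Ms (b' j) b) ∧
    I.mem {a : α → 𝕄 | ∀ j, φ.Realize (Sum.elim a (b' j))}

/-! ### `h^⫝`-inconsistency and the derived relation `⫝'` -/

/-- A family of formulas is `h^⫝`-inconsistent with respect to `P = tp(a₀/Ms)`. -/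
def HInconsistent (R : IndRel L 𝕄) (Ms : Set 𝕄) {α : Type v} (a₀ : α → 𝕄)
    {ι : Type w} (m : ι → ℕ) (φ : ∀ i : ι, L.Formula (α ⊕ Fin (m i)))
    (b : ∀ i : ι, Fin (m i) → 𝕄) : Prop :=
  ¬ ∃ a : α → 𝕄, EqTpOver L Ms a a₀ ∧
      R.rel (Set.range a) Ms (⋃ i, Set.range (b i)) ∧
      ∀ i, (φ i).Realize (Sum.elim a (b i))

/-- A single formula is `h^⫝`-inconsistent with respect to `P = tp(a₀/Ms)`. -/
def HInconsistentSingle (R : IndRel L 𝕄) (Ms : Set 𝕄) {α : Type v} (a₀ : α → 𝕄)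
    {n : ℕ} (φ : L.Formula (α ⊕ Fin n)) (b : Fin n → 𝕄) : Prop :=
  ¬ ∃ a : α → 𝕄, EqTpOver L Ms a a₀ ∧ R.rel (Set.range a) Ms (Set.range b) ∧
      φ.Realize (Sum.elim a b)

/-- `φ(x, b)` `h^⫝`-Kim-divides with respect to `tp(a₀/Ms)`. -/
def HKimDivides (R : IndRel L 𝕄) (Ms : Set 𝕄) {α : Type v} (a₀ : α → 𝕄)
    {n : ℕ} (φ : L.Formula (α ⊕ Fin n)) (b : Fin n → 𝕄) : Prop :=
  ∃ B : ℕ → Fin n → 𝕄, CoheirMorley L Ms B ∧ B 0 = b ∧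
    HInconsistent R Ms a₀ (fun _ : ℕ => n) (fun _ => φ) B

/-- `φ(x, b)` `h^⫝`-Kim-forks with respect to `tp(a₀/Ms)`. -/
def HKimForks (R : IndRel L 𝕄) (Ms : Set 𝕄) {α : Type v} (a₀ : α → 𝕄)
    {n : ℕ} (φ : L.Formula (α ⊕ Fin n)) (b : Fin n → 𝕄) : Prop :=
  ∃ (N : ℕ) (m : Fin N → ℕ) (ψ : ∀ j : Fin N, L.Formula (α ⊕ Fin (m j)))
    (c : ∀ j : Fin N, Fin (m j) → 𝕄),
    (∀ j, HKimDivides R Ms a₀ (ψ j) (c j)) ∧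
    ∀ a : α → 𝕄, φ.Realize (Sum.elim a b) → ∃ j, (ψ j).Realize (Sum.elim a (c j))

/-- `φ(x, b)` `h^⫝`-quasi-divides with respect to `tp(a₀/Ms)`. -/
def HQuasiDivides (R : IndRel L 𝕄) (Ms : Set 𝕄) {α : Type v} (a₀ : α → 𝕄)
    {n : ℕ} (φ : L.Formula (α ⊕ Fin n)) (b : Fin n → 𝕄) : Prop :=
  ∃ (mm : ℕ) (b' : Fin mm → Fin n → 𝕄), 0 < mm ∧ (∀ j, EqTpOver L Ms (b' j) b) ∧
    HInconsistent R Ms a₀ (fun _ : Fin mm => n) (fun _ => φ) b'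

/-- The derived relation `⫝'` on tuples:
`tp(a / Ms b)` contains no formula `h^⫝`-Kim-forking w.r.t. `tp(a/Ms)`. -/
def DerivedIndep (R : IndRel L 𝕄) (Ms : Set 𝕄) {α : Type v} {β : Type w}
    (a : α → 𝕄) (b : β → 𝕄) : Prop :=
  ∀ (n : ℕ) (φ : L.Formula (α ⊕ Fin n)) (d : Fin n → 𝕄),
    (∀ i, d i ∈ Ms ∪ Set.range b) → φ.Realize (Sum.elim a d) →
    ¬ HKimForks R Ms a φ d

/-- The derived relation `⫝'` as a relation between sets over models. -/
def derived (R : IndRel L 𝕄) : IndRel L 𝕄 where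
  rel A Ms B := ∀ (n : ℕ) (φ : L.Formula (↥A ⊕ Fin n)) (d : Fin n → 𝕄),
    (∀ i, d i ∈ Ms ∪ B) → φ.Realize (Sum.elim (fun x : A => (x : 𝕄)) d) →
    ¬ HKimForks R Ms (fun x : A => (x : 𝕄)) φ d

/-! ### Coheir trees -/

/-- The tuple, indexed by extensions, consisting of the part of the tree `c`
lying (weakly) above the node `ν` (where `ν` has length `Lh`). -/
def subtreeTupleLen {α : Type v} {n : ℕ} (c : {l : List ℕ // l.length ≤ n} → α → 𝕄)
    (Lh : ℕ) (ν : List ℕ) (hν : ν.length = Lh) :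
    ({s : List ℕ // Lh + s.length ≤ n} × α) → 𝕄 :=
  fun p => c ⟨ν ++ p.1.1, by rw [List.length_append, hν]; exact p.1.2⟩ p.2

end NSOP2Paper

/-! The set of formulas `tp(ba/M) ∪ q(y)` is finitely satisfiable in `M`: a finite part of
`tp(ba/M)` is a single formula `θ(x, y)`, and `∃x θ(x, y)` lies in `tp(a/M) ⊆ q`, so together
with finitely many formulas of `q` it is realized by some `m ∈ M`; as `M` is an elementary
submodel, `θ(x, m)` then has a solution in `M` as well. An ultrafilter on tuples from `M`
extends this set to a global type `Q(x, y)` finitely satisfiable in `M`. Take a coheir Morley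
sequence `(cᵢ)` in `Q`. Its `y`-part is a coheir Morley sequence in `q`, so it has the same
type over `M` as `(aⁱ)`, because a global type finitely satisfiable in `M` is `M`-invariant.
An automorphism fixing `M` that maps this `y`-part onto `(aⁱ)` maps `(cᵢ)` to the required
sequence `(bⁱaⁱ)`. The finite case is an initial segment of the infinite one. -/

namespace NSOP2Paper

variable {L : FirstOrder.Language.{u, u}} {𝕄 : Type u} [L.Structure 𝕄]

lemma exists_fin_support_left {V W : Type*} (φ : L.Formula (V ⊕ W)) :
    ∃ (k : ℕ) (g : Fin k → V), Function.Injective g ∧ ∃ ψ : L.Formula (Fin k ⊕ W),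
      ∀ (v : V → 𝕄) (w : W → 𝕄),
        φ.Realize (Sum.elim v w) ↔ ψ.Realize (Sum.elim (v ∘ g) w) := by
  classical
  let s := φ.freeVarFinset.toLeft
  let F : φ.freeVarFinset → Fin s.card ⊕ W := fun x => match x with
    | ⟨.inl a, h⟩ => .inl (s.equivFin ⟨a, Finset.mem_toLeft.2 h⟩)
    | ⟨.inr b, _⟩ => .inr b
  refine ⟨s.card, fun i => s.equivFin.symm i, Subtype.val_injective.comp s.equivFin.symm.injective,
    φ.restrictFreeVar F, fun v w => (BoundedFormula.realize_restrictFreeVar _ ?_).symm⟩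
  rintro ⟨a | b, h⟩ <;> simp [F]

lemma exists_fin_support_right {V W : Type*} (φ : L.Formula (V ⊕ W)) :
    ∃ (k : ℕ) (g : Fin k → W) (ψ : L.Formula (V ⊕ Fin k)),
      ∀ (v : V → 𝕄) (w : W → 𝕄),
        φ.Realize (Sum.elim v w) ↔ ψ.Realize (Sum.elim v (w ∘ g)) := by
  obtain ⟨k, g, -, ψ, hψ⟩ := exists_fin_support_left (𝕄 := 𝕄) (φ.relabel Sum.swap)
  refine ⟨k, g, ψ.relabel Sum.swap, fun v w => ?_⟩
  simpa [Formula.realize_relabel] using hψ w v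

lemma exists_realize_iff_forall_mem {V : Type*} (C : Set 𝕄) (t : Finset (FmlP L 𝕄 V))
    (ht : ∀ p ∈ t, ∀ i, p.2.2 i ∈ C) :
    ∃ (K : ℕ) (θ : L.Formula (V ⊕ Fin K)) (d : Fin K → 𝕄), (∀ i, d i ∈ C) ∧
      ∀ v : V → 𝕄, θ.Realize (Sum.elim v d) ↔ ∀ p ∈ t, p.2.1.Realize (Sum.elim v p.2.2) := by
  classical
  induction t using Finset.induction_on with
  | empty => exact ⟨0, ⊤, Fin.elim0, fun i => i.elim0, by simp⟩
  | insert p t _ ih =>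
    obtain ⟨K, θ, d, hd, hθ⟩ := ih fun p hp => ht p (Finset.mem_insert_of_mem hp)
    refine ⟨p.1 + K, p.2.1.relabel (Sum.map id (Fin.castAdd K)) ⊓
        θ.relabel (Sum.map id (Fin.natAdd p.1)), Fin.append p.2.2 d,
      Fin.addCases (by simpa using ht p (Finset.mem_insert_self p t)) (by simpa using hd),
      fun v => ?_⟩
    have hleft : Sum.elim v (Fin.append p.2.2 d) ∘ Sum.map id (Fin.castAdd K) =
        Sum.elim v p.2.2 := by
      ext (x | j) <;> simp
    have hright : Sum.elim v (Fin.append p.2.2 d) ∘ Sum.map id (Fin.natAdd p.1) =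
        Sum.elim v d := by
      ext (x | j) <;> simp
    simp only [Formula.realize_inf, Formula.realize_relabel, hleft, hright, hθ,
      Finset.forall_mem_insert]

namespace EqTpOver

variable {C : Set 𝕄} {V : Type*} {x y z : V → 𝕄}

lemma refl (x : V → 𝕄) : EqTpOver L C x x := fun _ _ _ _ => Iff.rfl

lemma symm (h : EqTpOver L C x y) : EqTpOver L C y x := fun n φ c hc => (h n φ c hc).symm

lemma trans (h₁ : EqTpOver L C x y) (h₂ : EqTpOver L C y z) : EqTpOver L C x z :=
  fun n φ c hc => (h₁ n φ c hc).trans (h₂ n φ c hc)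

lemma comp (h : EqTpOver L C x y) {W : Type*} (f : W → V) : EqTpOver L C (x ∘ f) (y ∘ f) := by
  intro n φ c hc
  have key : ∀ u : V → 𝕄, Sum.elim u c ∘ Sum.map f id = Sum.elim (u ∘ f) c := by
    intro u; ext (w | i) <;> rfl
  simpa only [Formula.realize_relabel, key] using h n (φ.relabel (Sum.map f id)) c hc

lemma sumElim_params (h : EqTpOver L C x y) {p : ℕ} {m : Fin p → 𝕄} (hm : ∀ i, m i ∈ C) :
    EqTpOver L C (Sum.elim x m) (Sum.elim y m) := by
  intro n φ c hc
  let ρ : (V ⊕ Fin p) ⊕ Fin n → V ⊕ Fin (p + n) :=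
    Sum.elim (Sum.elim Sum.inl (Sum.inr ∘ Fin.castAdd n)) (Sum.inr ∘ Fin.natAdd p)
  have key : ∀ u : V → 𝕄, Sum.elim u (Fin.append m c) ∘ ρ = Sum.elim (Sum.elim u m) c := by
    intro u; ext ((v | i) | i) <;> simp [ρ]
  simpa only [Formula.realize_relabel, key] using
    h (p + n) (φ.relabel ρ) (Fin.append m c) (Fin.addCases (by simpa using hm) (by simpa using hc))

lemma realize_iff_of_mem {n : ℕ} {d d' : Fin n → 𝕄} (h : EqTpOver L C d d') {γ : Type*}
    (ψ : L.Formula (γ ⊕ Fin n)) {m : γ → 𝕄} (hm : ∀ i, m i ∈ C) :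
    ψ.Realize (Sum.elim m d) ↔ ψ.Realize (Sum.elim m d') := by
  obtain ⟨k, g, -, Ψ, hΨ⟩ := exists_fin_support_left (𝕄 := 𝕄) ψ
  simpa [hΨ, Formula.realize_relabel] using
    h k (Ψ.relabel Sum.swap) (m ∘ g) fun i => hm (g i)

lemma sumElim_coe_empty (h : EqTpOver L C x y) :
    EqTpOver L (∅ : Set 𝕄) (Sum.elim ((↑) : C → 𝕄) x) (Sum.elim ((↑) : C → 𝕄) y) := by
  rintro (_ | _) φ c hc
  · let ρ : (C ⊕ V) ⊕ Fin 0 → V ⊕ C := Sum.elim Sum.swap Fin.elim0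
    obtain ⟨k, g, ψ, hψ⟩ := exists_fin_support_right (𝕄 := 𝕄) (φ.relabel ρ)
    have key : ∀ u : V → 𝕄, Sum.elim u ((↑) : C → 𝕄) ∘ ρ = Sum.elim (Sum.elim (↑) u) c := by
      intro u; ext ((v | i) | i) <;> first | rfl | exact i.elim0
    have := h k ψ (Subtype.val ∘ g) fun i => (g i).2
    rwa [← hψ, ← hψ, Formula.realize_relabel, Formula.realize_relabel, key, key] at this
  · exact absurd (hc 0) (Set.notMem_empty _)

lemma equiv_comp {σ : 𝕄 ≃[L] 𝕄} (hσ : ∀ m ∈ C, σ m = m) (x : V → 𝕄) :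
    EqTpOver L C (σ ∘ x) x := by
  intro n φ c hc
  have : σ ∘ Sum.elim x c = Sum.elim (σ ∘ x) c := by
    ext (v | i)
    · rfl
    · exact hσ _ (hc i)
  rw [← this, StrongHomClass.realize_formula]

end EqTpOver

def FmlP.relabel {α : Type v} {γ : Type w} (f : α → γ) (p : FmlP L 𝕄 α) : FmlP L 𝕄 γ :=
  ⟨p.1, (p.2.1.relabel (Sum.map f id), p.2.2)⟩

lemma FmlP.realize_relabel {α : Type v} {γ : Type w} (f : α → γ) (p : FmlP L 𝕄 α) (m : γ → 𝕄) :
    (p.relabel f).2.1.Realize (Sum.elim m (p.relabel f).2.2) ↔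
      p.2.1.Realize (Sum.elim (m ∘ f) p.2.2) := by
  have : Sum.elim m p.2.2 ∘ Sum.map f id = Sum.elim (m ∘ f) p.2.2 := by ext (a | i) <;> rfl
  simp only [FmlP.relabel, Formula.realize_relabel, this]

namespace RealizesType

variable {γ : Type v} {q : GlobalType L 𝕄 γ} {x : γ → 𝕄} {D : Set 𝕄}

lemma realize_iff_mem (hx : RealizesType q x D) {n : ℕ} (φ : L.Formula (γ ⊕ Fin n))
    {c : Fin n → 𝕄} (hc : ∀ i, c i ∈ D) :
    φ.Realize (Sum.elim x c) ↔ (⟨n, (φ, c)⟩ : FmlP L 𝕄 γ) ∈ q.carrier := by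
  refine ⟨fun hφ => (q.complete n φ c).resolve_right fun hnot => ?_, hx n φ c hc⟩
  exact Formula.realize_not.1 (hx n φ.not c hc hnot) hφ

lemma extendsTpOver (hx : RealizesType q x D) : ExtendsTpOver q D x :=
  fun _ φ _ hc => (hx.realize_iff_mem φ hc).1

lemma eqTpOver {y : γ → 𝕄} (hx : RealizesType q x D) (hy : ExtendsTpOver q D y) :
    EqTpOver L D x y := by
  intro n φ c hc
  refine ⟨fun hφ => by_contra fun hnot => ?_, fun hφ => hx n φ c hc (hy n φ c hc hφ)⟩
  exact Formula.realize_not.1 (hx n φ.not c hc (hy n φ.not c hc hnot)) hφ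

lemma mono {D' : Set 𝕄} (hx : RealizesType q x D) (h : D' ⊆ D) : RealizesType q x D' :=
  fun n φ c hc => hx n φ c fun i => h (hc i)

lemma comp_of_relabel_mem {α : Type w} {Q : GlobalType L 𝕄 α} {f : γ → α} {y : α → 𝕄}
    (hy : RealizesType Q y D) (hqQ : ∀ p ∈ q.carrier, p.relabel f ∈ Q.carrier) :
    RealizesType q (y ∘ f) D :=
  fun n φ c hc hφ => (FmlP.realize_relabel f ⟨n, (φ, c)⟩ y).1 (hy n _ c hc (hqQ _ hφ))

end RealizesType

lemma GlobalType.FinSatInM.mem_of_eqTpOver {Ms : Set 𝕄} {γ : Type v} {q : GlobalType L 𝕄 γ}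
    (hq : q.FinSatInM Ms) {n : ℕ} {ψ : L.Formula (γ ⊕ Fin n)} {d d' : Fin n → 𝕄}
    (h : EqTpOver L Ms d d') (hd : (⟨n, (ψ, d)⟩ : FmlP L 𝕄 γ) ∈ q.carrier) :
    (⟨n, (ψ, d')⟩ : FmlP L 𝕄 γ) ∈ q.carrier := by
  classical
  refine (q.complete n ψ d').resolve_right fun hnot => ?_
  obtain ⟨m, hm, hmr⟩ := hq {⟨n, (ψ, d)⟩, ⟨n, (ψ.not, d')⟩} (by
    simp [Set.insert_subset_iff, hd, hnot])
  have hψ : ψ.Realize (Sum.elim m d) := hmr ⟨n, (ψ, d)⟩ (by simp)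
  have hnψ : ψ.not.Realize (Sum.elim m d') := hmr ⟨n, (ψ.not, d')⟩ (by simp)
  exact Formula.realize_not.1 hnψ ((h.realize_iff_of_mem ψ hm).1 hψ)

lemma exists_globalType_finSatInM {γ : Type v} (Ms : Set 𝕄) (Γ : Set (FmlP L 𝕄 γ))
    (hΓ : ∀ t : Finset (FmlP L 𝕄 γ), ↑t ⊆ Γ →
      ∃ m : γ → 𝕄, (∀ i, m i ∈ Ms) ∧ ∀ p ∈ t, p.2.1.Realize (Sum.elim m p.2.2)) :
    ∃ Q : GlobalType L 𝕄 γ, Q.FinSatInM Ms ∧ Γ ⊆ Q.carrier := by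
  classical
  let S : FmlP L 𝕄 γ → Set {m : γ → 𝕄 // ∀ i, m i ∈ Ms} :=
    fun p => {m | p.2.1.Realize (Sum.elim m.1 p.2.2)}
  obtain ⟨U, hU⟩ := Ultrafilter.exists_ultrafilter_of_finite_inter_nonempty (S '' Γ) (by
    intro T hT
    obtain ⟨t, ht, rfl⟩ := Finset.subset_set_image_iff.1 hT
    obtain ⟨m, hm, hmt⟩ := hΓ t ht
    exact ⟨⟨m, hm⟩, by simpa [S] using hmt⟩)
  have hU_fin : ∀ t : Finset (FmlP L 𝕄 γ), (∀ p ∈ t, S p ∈ U) →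
      ∃ m : {m : γ → 𝕄 // ∀ i, m i ∈ Ms}, ∀ p ∈ t, m ∈ S p := fun t ht =>
    (U.nonempty_of_mem ((Filter.biInter_finset_mem t).2 ht)).imp fun _ hm => Set.mem_iInter₂.1 hm
  refine ⟨⟨{p | S p ∈ U}, fun t ht => ?_, fun n φ c => ?_⟩, fun t ht => ?_,
    fun p hp => hU ⟨p, hp, rfl⟩⟩
  · obtain ⟨m, hm⟩ := hU_fin t ht
    exact ⟨m.1, hm⟩
  · have : S ⟨n, (φ.not, c)⟩ = (S ⟨n, (φ, c)⟩)ᶜ := by ext m; simp [S]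
    show S _ ∈ U ∨ S _ ∈ U
    rw [this, Ultrafilter.compl_mem_iff_notMem]
    exact em _
  · obtain ⟨m, hm⟩ := hU_fin t ht
    exact ⟨m.1, m.2, hm⟩

lemma IsElemSubmodel.exists_formula_exists_mem {Ms : Set 𝕄} (hMs : IsElemSubmodel L Ms)
    {β γ : Type*} (hne : Nonempty (β → 𝕄)) (φ : L.Formula (β ⊕ γ)) :
    ∃ χ : L.Formula γ, (∀ (u : β → 𝕄) (v : γ → 𝕄), φ.Realize (Sum.elim u v) → χ.Realize v) ∧
      ∀ v : γ → 𝕄, (∀ i, v i ∈ Ms) → χ.Realize v →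
        ∃ u : β → 𝕄, (∀ y, u y ∈ Ms) ∧ φ.Realize (Sum.elim u v) := by
  obtain ⟨k, g, hg, ψ, hψ⟩ := exists_fin_support_left (𝕄 := 𝕄) φ
  obtain ⟨S, rfl⟩ := hMs
  refine ⟨(ψ.relabel Sum.swap).iExs (Fin k), fun u v h => ?_, fun v hv h => ?_⟩
  · rw [Formula.realize_iExs]
    exact ⟨u ∘ g, by simpa [Formula.realize_relabel] using (hψ u v).1 h⟩
  have hS : ((ψ.relabel Sum.swap).iExs (Fin k)).Realize (fun i => (⟨v i, hv i⟩ : S)) :=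
    (S.subtype.map_formula _ _).1 h
  obtain ⟨e, heS⟩ := Formula.realize_iExs.1 hS
  have he : ψ.Realize (Sum.elim (Subtype.val ∘ e) v) := by
    have key : (S.subtype ∘ Sum.elim (fun i => (⟨v i, hv i⟩ : S)) e) ∘ Sum.swap =
        Sum.elim (Subtype.val ∘ e) v := by
      ext (i | j) <;> rfl
    rw [← key, ← Formula.realize_relabel]
    exact (S.subtype.map_formula _ _).2 heS
  have : Nonempty (β → S) := by
    rcases isEmpty_or_nonempty β with hβ | hβ
    · infer_instance
    · have : Nonempty 𝕄 := ⟨hne.some hβ.some⟩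
      infer_instance
  let u : β → S := Function.extend g e (Classical.arbitrary _)
  refine ⟨Subtype.val ∘ u, fun y => (u y).2, (hψ _ v).2 ?_⟩
  have : u ∘ g = e := funext fun i => hg.extend_apply e _ i
  rwa [Function.comp_assoc, this]

lemma exists_mem_realize_sumElim {Ms : Set 𝕄} (hMs : IsElemSubmodel L Ms) {α : Type v}
    {β : Type w} {q : GlobalType L 𝕄 α} (hq : q.FinSatInM Ms) {a : α → 𝕄}
    (ha : ExtendsTpOver q Ms a) (b : β → 𝕄) {K : ℕ} (θ : L.Formula ((β ⊕ α) ⊕ Fin K))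
    {d : Fin K → 𝕄} (hd : ∀ i, d i ∈ Ms) (hθ : θ.Realize (Sum.elim (Sum.elim b a) d))
    (t : Finset (FmlP L 𝕄 α)) (ht : ↑t ⊆ q.carrier) :
    ∃ m : β ⊕ α → 𝕄, (∀ i, m i ∈ Ms) ∧ θ.Realize (Sum.elim m d) ∧
      ∀ p ∈ t, p.2.1.Realize (Sum.elim (m ∘ Sum.inr) p.2.2) := by
  classical
  have hassoc : ∀ (u : β → 𝕄) (x : α → 𝕄),
      Sum.elim u (Sum.elim x d) ∘ Equiv.sumAssoc β α (Fin K) = Sum.elim (Sum.elim u x) d := by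
    intro u x; ext ((y | x) | i) <;> rfl
  obtain ⟨χ, hχ, hχ_mem⟩ :=
    hMs.exists_formula_exists_mem ⟨b⟩ (θ.relabel (Equiv.sumAssoc β α (Fin K)))
  have hχq : (⟨K, (χ, d)⟩ : FmlP L 𝕄 α) ∈ q.carrier :=
    ha K χ d hd (hχ b _ (by rwa [Formula.realize_relabel, hassoc]))
  obtain ⟨mα, hmα, hmα_real⟩ := hq (insert ⟨K, (χ, d)⟩ t)
    (by simpa [Set.insert_subset_iff] using ⟨hχq, ht⟩)
  obtain ⟨mβ, hmβ, hθm⟩ := hχ_mem (Sum.elim mα d) (by rintro (i | i); exacts [hmα i, hd i])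
    (hmα_real _ (Finset.mem_insert_self _ _))
  rw [Formula.realize_relabel, hassoc] at hθm
  exact ⟨Sum.elim mβ mα, by rintro (y | x); exacts [hmβ y, hmα x], hθm,
    fun p hp => hmα_real p (Finset.mem_insert_of_mem hp)⟩

lemma exists_globalType_extends_sumElim {Ms : Set 𝕄} (hMs : IsElemSubmodel L Ms) {α : Type v}
    {β : Type w} {q : GlobalType L 𝕄 α} (hq : q.FinSatInM Ms) {a : α → 𝕄}
    (ha : ExtendsTpOver q Ms a) (b : β → 𝕄) :
    ∃ Q : GlobalType L 𝕄 (β ⊕ α), Q.FinSatInM Ms ∧ ExtendsTpOver Q Ms (Sum.elim b a) ∧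
      ∀ p ∈ q.carrier, p.relabel Sum.inr ∈ Q.carrier := by
  classical
  let Γ : Set (FmlP L 𝕄 (β ⊕ α)) :=
    {p | (∀ i, p.2.2 i ∈ Ms) ∧ p.2.1.Realize (Sum.elim (Sum.elim b a) p.2.2)}
  obtain ⟨Q, hQ, hΓQ⟩ := exists_globalType_finSatInM Ms (Γ ∪ FmlP.relabel Sum.inr '' q.carrier) (by
    intro t ht
    obtain ⟨K, θ, d, hd, hθ⟩ := exists_realize_iff_forall_mem Ms (t.filter (· ∈ Γ))
      fun p hp => (Finset.mem_filter.1 hp).2.1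
    have ht_rest : (↑(t.filter (· ∉ Γ)) : Set (FmlP L 𝕄 (β ⊕ α))) ⊆
        FmlP.relabel Sum.inr '' q.carrier := by
      intro p hp
      obtain ⟨hpt, hpΓ⟩ := Finset.mem_filter.1 hp
      exact (ht hpt).resolve_left hpΓ
    obtain ⟨t', ht', ht'_image⟩ := Finset.subset_set_image_iff.1 ht_rest
    obtain ⟨m, hm, hθm, hm'⟩ := exists_mem_realize_sumElim hMs hq ha b θ hd
      ((hθ _).2 fun p hp => (Finset.mem_filter.1 hp).2.2) t' ht'
    refine ⟨m, hm, fun p hp => ?_⟩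
    by_cases hpΓ : p ∈ Γ
    · exact (hθ m).1 hθm p (Finset.mem_filter.2 ⟨hp, hpΓ⟩)
    · obtain ⟨p', hp', rfl⟩ := Finset.mem_image.1 (ht'_image ▸ Finset.mem_filter.2 ⟨hp, hpΓ⟩)
      exact (FmlP.realize_relabel _ _ _).2 (hm' p' hp'))
  exact ⟨Q, hQ, fun n φ c hc h => hΓQ (Or.inl ⟨hc, h⟩), fun p hp => hΓQ (Or.inr ⟨p, hp, rfl⟩)⟩

lemma mk_sum_lt {α β : Type u} {κ : Cardinal.{u}} (hκ : Cardinal.aleph0 ≤ κ)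
    (hα : Cardinal.mk α < κ) (hβ : Cardinal.mk β < κ) : Cardinal.mk (α ⊕ β) < κ := by
  simpa using Cardinal.add_lt_of_lt hκ hα hβ

lemma mk_nat_prod_lt {α : Type u} {κ : Cardinal.{u}} (hκ : Cardinal.aleph0 < κ)
    (hα : Cardinal.mk α < κ) : Cardinal.mk (ℕ × α) < κ := by
  simpa using Cardinal.mul_lt_of_lt hκ.le hκ hα

lemma exists_seq_of_exists_next {T : Type*} [Nonempty T] (G : (ℕ → T) → ℕ → T → Prop)
    (hG : ∀ f g i t, (∀ j < i, f j = g j) → G f i t → G g i t)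
    (hex : ∀ f i, ∃ t, G f i t) : ∃ C : ℕ → T, ∀ i, G C i (C i) := by
  classical
  let D : ℕ → ℕ → T := fun i => Nat.rec (fun _ => Classical.arbitrary T)
    (fun i Di => Function.update Di i (Classical.choose (hex Di i))) i
  have hD : ∀ i j, j < i → D i j = D (j + 1) j := by
    intro i
    induction i with
    | zero => intro j hj; omega
    | succ i ih =>
      intro j hj
      rcases Nat.lt_succ_iff_lt_or_eq.1 hj with h | rfl
      · exact (Function.update_of_ne h.ne _ _).trans (ih j h)
      · rfl
  refine ⟨fun i => D (i + 1) i, fun i => ?_⟩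
  have hDi : D (i + 1) i = Classical.choose (hex (D i) i) := Function.update_self _ _ _
  show G _ i (D (i + 1) i)
  rw [hDi]
  exact hG _ _ i _ (fun j hj => hD i j hj) (Classical.choose_spec (hex (D i) i))

section Saturation

variable {κ : Cardinal.{u}} (hsat : IsSaturated L 𝕄 κ) {γ : Type u} (hγ : Cardinal.mk γ < κ)
  (Q : GlobalType L 𝕄 γ)
include hsat hγ

lemma IsSaturated.exists_realizesType {D : Set 𝕄} (hD : Cardinal.mk D < κ) :
    ∃ c : γ → 𝕄, RealizesType Q c D := by
  obtain ⟨c, hc⟩ := hsat γ D hγ hD {p | p ∈ Q.carrier ∧ ∀ i, p.2.2 i ∈ D}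
    (fun p hp => hp.2) (fun t ht => Q.consistent t fun p hp => (ht hp).1)
  exact ⟨c, fun n φ d hd hφ => hc ⟨n, (φ, d)⟩ ⟨hφ, hd⟩⟩

lemma IsSaturated.exists_morleyIn (hκ : Cardinal.aleph0 < κ) {Ms : Set 𝕄}
    (hMs : Cardinal.mk Ms < κ) (hQ : Q.FinSatInM Ms) : ∃ C : ℕ → γ → 𝕄, MorleyIn Q Ms C := by
  have : Nonempty (γ → 𝕄) := (Q.consistent ∅ (by simp)).nonempty
  have hcard : ∀ (f : ℕ → γ → 𝕄) (i : ℕ),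
      Cardinal.mk ↥(Ms ∪ ⋃ (j : ℕ) (_ : j < i), Set.range (f j)) < κ := by
    intro f i
    have hsub : (⋃ (j : ℕ) (_ : j < i), Set.range (f j)) ⊆
        Set.range fun p : ℕ × γ => f p.1 p.2 :=
      Set.iUnion₂_subset fun j _ => Set.range_subset_iff.2 fun y => ⟨(j, y), rfl⟩
    exact (Cardinal.mk_union_le _ _).trans_lt (Cardinal.add_lt_of_lt hκ.le hMs
      ((Cardinal.mk_le_mk_of_subset hsub).trans_lt
        (Cardinal.mk_range_le.trans_lt (mk_nat_prod_lt hκ hγ))))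
  obtain ⟨C, hC⟩ := exists_seq_of_exists_next
    (fun f i c => RealizesType Q c (Ms ∪ ⋃ (j : ℕ) (_ : j < i), Set.range (f j)))
    (fun f g i c hfg hc => by
      have : (⋃ (j : ℕ) (_ : j < i), Set.range (f j)) = ⋃ (j : ℕ) (_ : j < i), Set.range (g j) :=
        Set.iUnion₂_congr fun j hj => by rw [hfg j hj]
      rwa [this] at hc)
    (fun f i => hsat.exists_realizesType hγ Q (hcard f i))
  exact ⟨C, hQ, hC⟩

end Saturation

lemma exists_formula_split_last {γ : Type*} {r n : ℕ}
    (φ : L.Formula ((Fin (r + 1) × γ) ⊕ Fin n)) :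
    ∃ (k : ℕ) (g : Fin k → (Fin r × γ) ⊕ Fin n) (ψ : L.Formula (γ ⊕ Fin k)),
      ∀ (Z : Fin (r + 1) → γ → 𝕄) (c : Fin n → 𝕄),
        φ.Realize (Sum.elim (fun p => Z p.1 p.2) c) ↔
          ψ.Realize (Sum.elim (Z (Fin.last r))
            (Sum.elim (fun p : Fin r × γ => Z p.1.castSucc p.2) c ∘ g)) := by
  let ρ : (Fin (r + 1) × γ) ⊕ Fin n → γ ⊕ ((Fin r × γ) ⊕ Fin n) :=
    Sum.elim (fun p => Fin.lastCases (Sum.inl p.2) (fun i => Sum.inr (Sum.inl (i, p.2))) p.1)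
      (Sum.inr ∘ Sum.inr)
  obtain ⟨k, g, ψ, hψ⟩ := exists_fin_support_right (𝕄 := 𝕄) (φ.relabel ρ)
  refine ⟨k, g, ψ, fun Z c => ?_⟩
  rw [← hψ, Formula.realize_relabel]
  congr! 1
  funext x
  rcases x with ⟨j, y⟩ | i
  · induction j using Fin.lastCases <;> simp [ρ]
  · rfl

namespace MorleyIn

variable {Ms : Set 𝕄} {γ : Type v} {q : GlobalType L 𝕄 γ} {X Y : ℕ → γ → 𝕄}

lemma eqTpOver_prefix (hX : MorleyIn q Ms X) (hY : MorleyIn q Ms Y) (r : ℕ) :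
    EqTpOver L Ms (fun p : Fin r × γ => X p.1 p.2) (fun p => Y p.1 p.2) := by
  induction r with
  | zero =>
    rw [show (fun p : Fin 0 × γ => X p.1 p.2) = fun p => Y p.1 p.2 from funext (·.1.elim0)]
    exact .refl _
  | succ r ih =>
    intro n φ c hc
    obtain ⟨k, g, ψ, hψ⟩ := exists_formula_split_last (𝕄 := 𝕄) φ
    have hsplit : ∀ Z : ℕ → γ → 𝕄,
        φ.Realize (Sum.elim (fun p : Fin (r + 1) × γ => Z p.1 p.2) c) ↔
          ψ.Realize (Sum.elim (Z r) (Sum.elim (fun p : Fin r × γ => Z p.1 p.2) c ∘ g)) :=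
      fun Z => by simpa using hψ (fun j => Z j) c
    have hparams : ∀ (Z : ℕ → γ → 𝕄) (i : Fin k),
        (Sum.elim (fun p : Fin r × γ => Z p.1 p.2) c ∘ g) i ∈
          Ms ∪ ⋃ (j : ℕ) (_ : j < r), Set.range (Z j) := by
      intro Z i
      rcases hi : g i with ⟨j, y⟩ | i'
      · simp only [Function.comp_apply, hi, Sum.elim_inl]
        exact Or.inr (Set.mem_biUnion j.2 ⟨y, rfl⟩)
      · simp only [Function.comp_apply, hi, Sum.elim_inr]
        exact Or.inl (hc i')
    have h := (ih.sumElim_params hc).comp g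
    rw [hsplit X, hsplit Y, (hX.2 r).realize_iff_mem _ (hparams X),
      (hY.2 r).realize_iff_mem _ (hparams Y)]
    exact ⟨hX.1.mem_of_eqTpOver h, hX.1.mem_of_eqTpOver h.symm⟩

lemma eqTpOver_flatSeq (hX : MorleyIn q Ms X) (hY : MorleyIn q Ms Y) :
    EqTpOver L Ms (flatSeq X) (flatSeq Y) := by
  intro n φ c hc
  obtain ⟨k, g, -, ψ, hψ⟩ := exists_fin_support_left (𝕄 := 𝕄) φ
  let N := Finset.univ.sup (fun i => (g i).1) + 1
  let h : Fin k → Fin N × γ := fun i =>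
    (⟨(g i).1, Nat.lt_succ_of_le (Finset.le_sup (f := fun i => (g i).1) (Finset.mem_univ i))⟩,
      (g i).2)
  have hcomp : ∀ Z : ℕ → γ → 𝕄, flatSeq Z ∘ g = (fun p : Fin N × γ => Z p.1 p.2) ∘ h :=
    fun Z => rfl
  rw [hψ, hψ, hcomp, hcomp]
  exact (hX.eqTpOver_prefix hY N).comp h n ψ c hc

lemma comp_of_relabel_mem {α : Type w} {Q : GlobalType L 𝕄 α} {C : ℕ → α → 𝕄}
    (hC : MorleyIn Q Ms C) (hq : q.FinSatInM Ms) {f : γ → α}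
    (hqQ : ∀ p ∈ q.carrier, p.relabel f ∈ Q.carrier) : MorleyIn q Ms (fun i => C i ∘ f) :=
  ⟨hq, fun i => ((hC.2 i).comp_of_relabel_mem hqQ).mono (Set.union_subset_union_right _
    (Set.iUnion₂_mono fun j _ => Set.range_comp_subset_range f (C j)))⟩

end MorleyIn

section Automorphism

variable (σ : 𝕄 ≃[L] 𝕄)

lemma realize_equiv_comp_sumElim {γ : Type*} {n : ℕ} (φ : L.Formula (γ ⊕ Fin n)) (x : γ → 𝕄)
    (c : Fin n → 𝕄) : φ.Realize (Sum.elim (σ ∘ x) c) ↔ φ.Realize (Sum.elim x (σ.symm ∘ c)) := by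
  have : σ ∘ Sum.elim x (σ.symm ∘ c) = Sum.elim (σ ∘ x) c := by
    ext (y | i)
    · rfl
    · exact σ.apply_symm_apply _
  rw [← this, StrongHomClass.realize_formula]

def FmlP.mapParams {γ : Type v} (f : 𝕄 → 𝕄) (p : FmlP L 𝕄 γ) : FmlP L 𝕄 γ :=
  ⟨p.1, (p.2.1, f ∘ p.2.2)⟩

def GlobalType.map {γ : Type v} (Q : GlobalType L 𝕄 γ) : GlobalType L 𝕄 γ where
  carrier := FmlP.mapParams σ.symm ⁻¹' Q.carrier
  consistent t ht := by
    classical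
    obtain ⟨x, hx⟩ := Q.consistent _ (by rw [Finset.coe_image]; exact Set.image_subset_iff.2 ht)
    exact ⟨σ ∘ x, fun p hp =>
      (realize_equiv_comp_sumElim σ _ _ _).2 (hx _ (Finset.mem_image_of_mem _ hp))⟩
  complete n φ c := Q.complete n φ (σ.symm ∘ c)

variable {σ} {Ms : Set 𝕄} {γ : Type v} {Q : GlobalType L 𝕄 γ}

lemma GlobalType.FinSatInM.map (hQ : Q.FinSatInM Ms) (hσ : ∀ m ∈ Ms, σ m = m) :
    (Q.map σ).FinSatInM Ms := by
  classical
  intro t ht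
  obtain ⟨m, hm, hmr⟩ := hQ _ (by rw [Finset.coe_image]; exact Set.image_subset_iff.2 ht)
  refine ⟨m, hm, fun p hp => ?_⟩
  have hσm : σ ∘ m = m := funext fun i => hσ _ (hm i)
  rw [← hσm, realize_equiv_comp_sumElim]
  exact hmr _ (Finset.mem_image_of_mem _ hp)

lemma RealizesType.map {x : γ → 𝕄} {D : Set 𝕄} (hx : RealizesType Q x D) :
    RealizesType (Q.map σ) (σ ∘ x) (σ '' D) := by
  intro n φ c hc hφ
  rw [realize_equiv_comp_sumElim]
  refine hx n φ _ (fun i => ?_) hφ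
  obtain ⟨d, hd, hdc⟩ := hc i
  simpa [← hdc] using hd

lemma MorleyIn.map {C : ℕ → γ → 𝕄} (hC : MorleyIn Q Ms C) (hσ : ∀ m ∈ Ms, σ m = m) :
    MorleyIn (Q.map σ) Ms (fun i => σ ∘ C i) := by
  refine ⟨hC.1.map hσ, fun i => ((hC.2 i).map (σ := σ)).mono ?_⟩
  rintro x (hx | hx)
  · exact ⟨x, Or.inl hx, hσ x hx⟩
  · obtain ⟨j, hj, y, rfl⟩ := Set.mem_iUnion₂.1 hx
    exact ⟨C j y, Or.inr (Set.mem_biUnion hj ⟨y, rfl⟩), rfl⟩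

end Automorphism

lemma IsStronglyHomogeneous.exists_fix_comp_eq {κ : Cardinal.{u}}
    (h : IsStronglyHomogeneous L 𝕄 κ) {Ms : Set 𝕄} {V : Type u}
    (hcard : Cardinal.mk (Ms ⊕ V) < κ) {x y : V → 𝕄} (hxy : EqTpOver L Ms x y) :
    ∃ σ : 𝕄 ≃[L] 𝕄, (∀ m ∈ Ms, σ m = m) ∧ σ ∘ x = y := by
  obtain ⟨σ, hσ⟩ := h _ hcard _ _ hxy.sumElim_coe_empty
  exact ⟨σ, fun m hm => hσ (Sum.inl ⟨m, hm⟩), funext fun v => hσ (Sum.inr v)⟩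

section Monster

variable {κ : Cardinal.{u}} (hmonster : IsMonster L 𝕄 κ) {Ms : Set 𝕄}
  (hMs : IsElemSubmodel L Ms) (hMssmall : Cardinal.mk Ms < κ) {α β : Type u}
  (hα : Cardinal.mk α < κ) (hβ : Cardinal.mk β < κ) {q : GlobalType L 𝕄 α}
include hmonster hMs hMssmall hα hβ

theorem exists_coheirMorley_sumElim {A : ℕ → α → 𝕄} (hA : MorleyIn q Ms A) {a : α → 𝕄}
    (ha : EqTpOver L Ms a (A 0)) (b : β → 𝕄) :
    ∃ B : ℕ → β → 𝕄, CoheirMorley L Ms (fun i => Sum.elim (B i) (A i)) ∧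
      ∀ i, EqTpOver L Ms (Sum.elim (B i) (A i)) (Sum.elim b a) := by
  obtain ⟨hκ, hsat, hhom⟩ := hmonster
  have hqa : ExtendsTpOver q Ms a := fun n φ c hc h =>
    ((hA.2 0).mono Set.subset_union_left).extendsTpOver n φ c hc ((ha n φ c hc).1 h)
  obtain ⟨Q, hQ, hQba, hqQ⟩ := exists_globalType_extends_sumElim hMs hA.1 hqa b
  obtain ⟨C, hC⟩ := hsat.exists_morleyIn (mk_sum_lt hκ.le hβ hα) Q hκ hMssmall hQ
  obtain ⟨σ, hσ, hσC⟩ := hhom.exists_fix_comp_eq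
    (mk_sum_lt hκ.le hMssmall (mk_nat_prod_lt hκ hα))
    ((hC.comp_of_relabel_mem hA.1 hqQ).eqTpOver_flatSeq hA)
  have hσC_i : ∀ i, σ ∘ C i = Sum.elim (σ ∘ C i ∘ Sum.inl) (A i) := fun i => by
    ext (y | x)
    · rfl
    · exact congrFun hσC (i, x)
  refine ⟨fun i => σ ∘ C i ∘ Sum.inl, ⟨Q.map σ, funext hσC_i ▸ hC.map hσ⟩, fun i => ?_⟩
  rw [← hσC_i]
  exact (EqTpOver.equiv_comp hσ _).trans (((hC.2 i).mono Set.subset_union_left).eqTpOver hQba)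

theorem exists_coheirMorley_sumElim_fin {n : ℕ} {A : Fin n → α → 𝕄} {A' : ℕ → α → 𝕄}
    (hA' : MorleyIn q Ms A') (hAA' : ∀ i : Fin n, A' i = A i) {a : α → 𝕄}
    (ha : ∀ i, EqTpOver L Ms a (A i)) (b : β → 𝕄) :
    ∃ B : Fin n → β → 𝕄,
      (∃ C : ℕ → (β ⊕ α) → 𝕄, CoheirMorley L Ms C ∧ ∀ i : Fin n, C i = Sum.elim (B i) (A i)) ∧
      ∀ i : Fin n, EqTpOver L Ms (Sum.elim (B i) (A i)) (Sum.elim b a) := by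
  rcases n with _ | n
  · obtain ⟨B, hB, -⟩ :=
      exists_coheirMorley_sumElim hmonster hMs hMssmall hα hβ hA' (.refl (A' 0)) b
    exact ⟨Fin.elim0, ⟨_, hB, fun i => i.elim0⟩, fun i => i.elim0⟩
  · obtain ⟨B, hB, hBba⟩ := exists_coheirMorley_sumElim hmonster hMs hMssmall hα hβ hA'
      (by simpa [← hAA'] using ha 0) b
    exact ⟨fun i => B i, ⟨_, hB, fun i => by rw [hAA']⟩, fun i => by simpa [hAA'] using hBba i⟩

end Monster

theorem coheir_pair_extension_general (L : FirstOrder.Language.{u, u}) (𝕄 : Type u) [L.Structure 𝕄]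
    (κ : Cardinal.{u}) (hmonster : IsMonster L 𝕄 κ)
    (Ms : Set 𝕄) (hMs : IsElemSubmodel L Ms) (hMssmall : Cardinal.mk Ms < κ)
    (α β : Type u) (hα : Cardinal.mk α < κ) (hβ : Cardinal.mk β < κ)
    (q : GlobalType L 𝕄 α) :
    (∀ (n : ℕ) (A : Fin n → α → 𝕄),
      (∃ A' : ℕ → α → 𝕄, MorleyIn q Ms A' ∧ ∀ i : Fin n, A' i = A i) →
      ∀ (a : α → 𝕄) (b : β → 𝕄), (∀ i, EqTpOver L Ms a (A i)) →
        ∃ B : Fin n → β → 𝕄,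
          (∃ C : ℕ → (β ⊕ α) → 𝕄, CoheirMorley L Ms C ∧
            ∀ i : Fin n, C i = Sum.elim (B i) (A i)) ∧
          ∀ i : Fin n, EqTpOver L Ms (Sum.elim (B i) (A i)) (Sum.elim b a)) ∧
    (∀ A : ℕ → α → 𝕄, MorleyIn q Ms A →
      ∀ (a : α → 𝕄) (b : β → 𝕄), (∀ i, EqTpOver L Ms a (A i)) →
        ∃ B : ℕ → β → 𝕄, CoheirMorley L Ms (fun i => Sum.elim (B i) (A i)) ∧
          ∀ i : ℕ, EqTpOver L Ms (Sum.elim (B i) (A i)) (Sum.elim b a)) :=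
  ⟨fun _ _ ⟨_, hA', hAA'⟩ _ b hab =>
    exists_coheirMorley_sumElim_fin hmonster hMs hMssmall hα hβ hA' hAA' hab b,
  fun _ hA _ b hab => exists_coheirMorley_sumElim hmonster hMs hMssmall hα hβ hA (hab 0) b⟩

/-- **Claim 3.4.** Let `q` be a global type finitely satisfiable in `M` and
`a¹,…,aⁿ` the first `n` terms of a coheir Morley sequence in `q` over `M`.
Let `a ≡_M a¹` and `b` any tuple.  Then there are `b¹,…,bⁿ` such that
`b¹a¹,…,bⁿaⁿ` are the first `n` terms of a coheir Morley sequence over `M`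
with `bⁱaⁱ ≡_M ba`; similarly for infinite coheir Morley sequences. -/
theorem coheir_pair_extension (L : FirstOrder.Language.{u, u}) (𝕄 : Type u) [L.Structure 𝕄]
    (κ : Cardinal.{u}) (hmonster : IsMonster L 𝕄 κ)
    (Ms : Set 𝕄) (hMs : IsElemSubmodel L Ms) (hMssmall : Cardinal.mk Ms < κ)
    (α β : Type u) (hα : Cardinal.mk α < κ) (hβ : Cardinal.mk β < κ)
    (q : GlobalType L 𝕄 α) (hq : q.FinSatInM Ms) :
    (∀ (n : ℕ) (A : Fin n → α → 𝕄),
      (∃ A' : ℕ → α → 𝕄, MorleyIn q Ms A' ∧ ∀ i : Fin n, A' i = A i) →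
      ∀ (a : α → 𝕄) (b : β → 𝕄), (∀ i, EqTpOver L Ms a (A i)) →
        ∃ B : Fin n → β → 𝕄,
          (∃ C : ℕ → (β ⊕ α) → 𝕄, CoheirMorley L Ms C ∧
            ∀ i : Fin n, C i = Sum.elim (B i) (A i)) ∧
          ∀ i : Fin n, EqTpOver L Ms (Sum.elim (B i) (A i)) (Sum.elim b a)) ∧
    (∀ A : ℕ → α → 𝕄, MorleyIn q Ms A →
      ∀ (a : α → 𝕄) (b : β → 𝕄), (∀ i, EqTpOver L Ms a (A i)) →
        ∃ B : ℕ → β → 𝕄, CoheirMorley L Ms (fun i => Sum.elim (B i) (A i)) ∧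
          ∀ i : ℕ, EqTpOver L Ms (Sum.elim (B i) (A i)) (Sum.elim b a)) :=
  coheir_pair_extension_general L 𝕄 κ hmonster Ms hMs hMssmall α β hα hβ q

end NSOP2Paper
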